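/- arXiv:2506.05353 — 2 statements merged into one kernel-verified Lean document; each statement's English description precedes it below -/
import Mathlib

section
/- The Lie-Yamaguti algebra structure 𝓛₄₄⁰ on ℂ⁴, given by [e₁,e₂]=e₃+e₄, [e₂,e₃]=e₄, [e₁,e₂,e₁]=e₃, [e₁,e₂,e₃]=−e₄, [e₁,e₃,e₂]=−e₄, degenerates to the structure 𝓛₀₃ given by [e₁,e₂]=e₃ and [e₁,e₂,e₁]=e₃. -/
open Filter Matrix Topology

/-- ℂ⁴ -/
abbrev V4 : Type := Fin 4 → ℂ

/-- GL₄(ℂ) -/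
abbrev GL4 := Matrix.GeneralLinearGroup (Fin 4) ℂ

/-- structure constants of a bilinear map on ℂ⁴: `μ i j` is the value on `(eᵢ, eⱼ)`. -/
abbrev Bil4 := Fin 4 → Fin 4 → V4

/-- structure constants of a trilinear map on ℂ⁴. -/
abbrev Tril4 := Fin 4 → Fin 4 → Fin 4 → V4

/-- standard basis vectors -/
noncomputable def e4 (k : Fin 4) : V4 := Pi.single k (1 : ℂ)

/-- action of `g ∈ GL₄(ℂ)` on a bilinear map: `(g·μ)(x,y) = g μ(g⁻¹x, g⁻¹y)`,
in structure constants. -/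
noncomputable def actBil (g : GL4) (μ : Bil4) : Bil4 := fun i j =>
  (g : Matrix (Fin 4) (Fin 4) ℂ).mulVec
    (∑ p, ∑ q,
      (((g⁻¹ : GL4) : Matrix (Fin 4) (Fin 4) ℂ) p i *
       ((g⁻¹ : GL4) : Matrix (Fin 4) (Fin 4) ℂ) q j) • μ p q)

/-- action of `g ∈ GL₄(ℂ)` on a trilinear map:
`(g·τ)(x,y,z) = g τ(g⁻¹x, g⁻¹y, g⁻¹z)`, in structure constants. -/
noncomputable def actTril (g : GL4) (τ : Tril4) : Tril4 := fun i j k =>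
  (g : Matrix (Fin 4) (Fin 4) ℂ).mulVec
    (∑ p, ∑ q, ∑ r,
      (((g⁻¹ : GL4) : Matrix (Fin 4) (Fin 4) ℂ) p i *
       ((g⁻¹ : GL4) : Matrix (Fin 4) (Fin 4) ℂ) q j *
       ((g⁻¹ : GL4) : Matrix (Fin 4) (Fin 4) ℂ) r k) • τ p q r)

/-- `(μ,τ)` degenerates to `(lam,sig)`: there is a curve `g : ℂ∖{0} → GL₄(ℂ)` with
`g(t)·μ → lam` and `g(t)·τ → sig` as `t → 0`. -/
def Degenerates (μ : Bil4) (τ : Tril4) (lam : Bil4) (sig : Tril4) : Prop :=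
  ∃ g : ℂ → GL4,
    Tendsto (fun t => actBil (g t) μ) (𝓝[≠] (0 : ℂ)) (𝓝 lam) ∧
    Tendsto (fun t => actTril (g t) τ) (𝓝[≠] (0 : ℂ)) (𝓝 sig)

noncomputable def μL44_0 : Bil4 := fun i j =>
  if i = (0 : Fin 4) ∧ j = (1 : Fin 4) then e4 2 + e4 3
  else if i = (1 : Fin 4) ∧ j = (0 : Fin 4) then -(e4 2 + e4 3)
  else if i = (1 : Fin 4) ∧ j = (2 : Fin 4) then e4 3
  else if i = (2 : Fin 4) ∧ j = (1 : Fin 4) then -(e4 3)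
  else 0

noncomputable def τL44_0 : Tril4 := fun i j k =>
  if i = (0 : Fin 4) ∧ j = (1 : Fin 4) ∧ k = (0 : Fin 4) then e4 2
  else if i = (1 : Fin 4) ∧ j = (0 : Fin 4) ∧ k = (0 : Fin 4) then -(e4 2)
  else if i = (0 : Fin 4) ∧ j = (1 : Fin 4) ∧ k = (2 : Fin 4) then -(e4 3)
  else if i = (1 : Fin 4) ∧ j = (0 : Fin 4) ∧ k = (2 : Fin 4) then -(-(e4 3))
  else if i = (0 : Fin 4) ∧ j = (2 : Fin 4) ∧ k = (1 : Fin 4) then -(e4 3)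
  else if i = (2 : Fin 4) ∧ j = (0 : Fin 4) ∧ k = (1 : Fin 4) then -(-(e4 3))
  else 0

noncomputable def μL03 : Bil4 := fun i j =>
  if i = (0 : Fin 4) ∧ j = (1 : Fin 4) then e4 2
  else if i = (1 : Fin 4) ∧ j = (0 : Fin 4) then -(e4 2)
  else 0

noncomputable def τL03 : Tril4 := fun i j k =>
  if i = (0 : Fin 4) ∧ j = (1 : Fin 4) ∧ k = (0 : Fin 4) then e4 2
  else if i = (1 : Fin 4) ∧ j = (0 : Fin 4) ∧ k = (0 : Fin 4) then -(e4 2)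
  else 0


noncomputable def gcur (t : ℂ) : GL4 :=
  if h : t = 0 then 1 else
  { val := Matrix.diagonal ![1, 1, 1, t]
    inv := Matrix.diagonal ![1, 1, 1, t⁻¹]
    val_inv := by
      rw [Matrix.diagonal_mul_diagonal]
      funext i j
      fin_cases i <;> fin_cases j <;>
        simp [Matrix.diagonal_apply, Matrix.one_apply, mul_inv_cancel₀ h]
    inv_val := by
      rw [Matrix.diagonal_mul_diagonal]
      funext i j
      fin_cases i <;> fin_cases j <;>
        simp [Matrix.diagonal_apply, Matrix.one_apply, inv_mul_cancel₀ h] }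

noncomputable def cB : Bil4 := fun i j =>
  if i = (0 : Fin 4) ∧ j = (1 : Fin 4) then e4 3
  else if i = (1 : Fin 4) ∧ j = (0 : Fin 4) then -(e4 3)
  else if i = (1 : Fin 4) ∧ j = (2 : Fin 4) then e4 3
  else if i = (2 : Fin 4) ∧ j = (1 : Fin 4) then -(e4 3)
  else 0

noncomputable def cT : Tril4 := fun i j k =>
  if i = (0 : Fin 4) ∧ j = (1 : Fin 4) ∧ k = (2 : Fin 4) then -(e4 3)
  else if i = (1 : Fin 4) ∧ j = (0 : Fin 4) ∧ k = (2 : Fin 4) then e4 3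
  else if i = (0 : Fin 4) ∧ j = (2 : Fin 4) ∧ k = (1 : Fin 4) then -(e4 3)
  else if i = (2 : Fin 4) ∧ j = (0 : Fin 4) ∧ k = (1 : Fin 4) then e4 3
  else 0

lemma gcur_coe {t : ℂ} (ht : t ≠ 0) :
    ((gcur t : GL4) : Matrix (Fin 4) (Fin 4) ℂ) = Matrix.diagonal ![1, 1, 1, t] := by
  simp [gcur, ht]

lemma gcur_inv_coe {t : ℂ} (ht : t ≠ 0) :
    (((gcur t)⁻¹ : GL4) : Matrix (Fin 4) (Fin 4) ℂ) = Matrix.diagonal ![1, 1, 1, t⁻¹] := by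
  simp only [gcur, ht, dif_neg, not_false_iff]
  rfl

lemma sum_diag_bil (d : Fin 4 → ℂ) (μ : Bil4) (i j : Fin 4) :
    (∑ p, ∑ q, ((Matrix.diagonal d) p i * (Matrix.diagonal d) q j) • μ p q)
      = (d i * d j) • μ i j := by
  simp [Matrix.diagonal_apply, ite_mul, zero_mul, mul_ite, mul_zero, ite_smul, zero_smul]

lemma sum_diag_tril (d : Fin 4 → ℂ) (τ : Tril4) (i j k : Fin 4) :
    (∑ p, ∑ q, ∑ r, ((Matrix.diagonal d) p i * (Matrix.diagonal d) q j *
        (Matrix.diagonal d) r k) • τ p q r)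
      = (d i * d j * d k) • τ i j k := by
  simp [Matrix.diagonal_apply, ite_mul, zero_mul, mul_ite, mul_zero, ite_smul, zero_smul]

lemma keyB {t : ℂ} (ht : t ≠ 0) :
    actBil (gcur t) μL44_0 = fun i j => μL03 i j + t • cB i j := by
  funext i j
  simp only [actBil, gcur_coe ht, gcur_inv_coe ht, sum_diag_bil]
  funext k
  fin_cases i <;> fin_cases j <;> fin_cases k <;>
    simp [μL44_0, μL03, cB, e4, Matrix.mulVec_diagonal, Pi.single_apply,
      mul_inv_cancel₀ ht, inv_mul_cancel₀ ht]

set_option maxHeartbeats 2000000 in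
lemma keyT {t : ℂ} (ht : t ≠ 0) :
    actTril (gcur t) τL44_0 = fun i j k => τL03 i j k + t • cT i j k := by
  funext i j k
  simp only [actTril, gcur_coe ht, gcur_inv_coe ht, sum_diag_tril]
  funext l
  fin_cases i <;> fin_cases j <;> fin_cases k <;> fin_cases l <;>
    simp [τL44_0, τL03, cT, e4, Matrix.mulVec_diagonal, Pi.single_apply,
      mul_inv_cancel₀ ht, inv_mul_cancel₀ ht]

/-- 𝓛₄₄⁰ degenerates to 𝓛₀₃. -/
theorem stmt1 : Degenerates μL44_0 τL44_0 μL03 τL03 := by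
  refine ⟨gcur, ?_, ?_⟩
  · have hc : Continuous fun t : ℂ => (fun i j => μL03 i j + t • cB i j : Bil4) := by
      refine continuous_pi fun i => continuous_pi fun j => ?_
      fun_prop
    have h0 : Tendsto (fun t : ℂ => (fun i j => μL03 i j + t • cB i j : Bil4))
        (𝓝[≠] (0 : ℂ)) (𝓝 μL03) := by
      have h1 : Tendsto (fun t : ℂ => (fun i j => μL03 i j + t • cB i j : Bil4))
          (𝓝 (0 : ℂ)) (𝓝 μL03) := by
        have := hc.tendsto 0
        simpa using this
      exact h1.mono_left nhdsWithin_le_nhds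
    refine h0.congr' ?_
    filter_upwards [self_mem_nhdsWithin] with t ht
    exact (keyB ht).symm
  · have hc : Continuous fun t : ℂ => (fun i j k => τL03 i j k + t • cT i j k : Tril4) := by
      refine continuous_pi fun i => continuous_pi fun j => continuous_pi fun k => ?_
      fun_prop
    have h0 : Tendsto (fun t : ℂ => (fun i j k => τL03 i j k + t • cT i j k : Tril4))
        (𝓝[≠] (0 : ℂ)) (𝓝 τL03) := by
      have h1 : Tendsto (fun t : ℂ => (fun i j k => τL03 i j k + t • cT i j k : Tril4))
          (𝓝 (0 : ℂ)) (𝓝 τL03) := by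
        have := hc.tendsto 0
        simpa using this
      exact h1.mono_left nhdsWithin_le_nhds
    refine h0.congr' ?_
    filter_upwards [self_mem_nhdsWithin] with t ht
    exact (keyT ht).symm
end

section
/- The one-parameter family of compatible Lie algebra structures 𝔏₂^α (α ∈ ℂ) on ℂ³, where 𝔏₂^α is given by [e₁,e₂]=e₃ and {e₁,e₂}=α e₃, degenerates (as a parametric family) to the structure 𝔏₁ given by [x,y]=0 for all x,y and {e₁,e₂}=e₃. -/
open Filter Matrix Topology

/-- ℂ³ -/
abbrev V3 : Type := Fin 3 → ℂ

/-- GL₃(ℂ) -/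
abbrev GL3 := Matrix.GeneralLinearGroup (Fin 3) ℂ

/-- structure constants of a bilinear map on ℂ³: `μ i j` is the value on `(eᵢ, eⱼ)`. -/
abbrev Bil3 := Fin 3 → Fin 3 → V3

/-- standard basis vectors -/
noncomputable def e3 (k : Fin 3) : V3 := Pi.single k (1 : ℂ)

/-- action of `g ∈ GL₃(ℂ)` on a bilinear map: `(g·μ)(x,y) = g μ(g⁻¹x, g⁻¹y)`,
in structure constants. -/
noncomputable def actBil3 (g : GL3) (μ : Bil3) : Bil3 := fun i j =>
  (g : Matrix (Fin 3) (Fin 3) ℂ).mulVec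
    (∑ p, ∑ q,
      (((g⁻¹ : GL3) : Matrix (Fin 3) (Fin 3) ℂ) p i *
       ((g⁻¹ : GL3) : Matrix (Fin 3) (Fin 3) ℂ) q j) • μ p q)

/-- the parametric family of pairs `(μ_α, ν_α)` of bilinear maps on ℂ³ degenerates to the
pair `(lam, rho)`. -/
def DegeneratesPairFam3 (μ ν : ℂ → Bil3) (lam rho : Bil3) : Prop :=
  ∃ f : ℂ → ℂ, ∃ g : ℂ → GL3,
    Tendsto (fun t => actBil3 (g t) (μ (f t))) (𝓝[≠] (0 : ℂ)) (𝓝 lam) ∧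
    Tendsto (fun t => actBil3 (g t) (ν (f t))) (𝓝[≠] (0 : ℂ)) (𝓝 rho)

noncomputable def μfrakL2 : Bil3 := fun i j =>
  if i = (0 : Fin 3) ∧ j = (1 : Fin 3) then e3 2
  else if i = (1 : Fin 3) ∧ j = (0 : Fin 3) then -(e3 2)
  else 0

noncomputable def νfrakL2 (α : ℂ) : Bil3 := fun i j =>
  if i = (0 : Fin 3) ∧ j = (1 : Fin 3) then α • e3 2
  else if i = (1 : Fin 3) ∧ j = (0 : Fin 3) then -(α • e3 2)
  else 0

noncomputable def zeroBil3 : Bil3 := fun _ _ => 0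

noncomputable def νfrakL1 : Bil3 := fun i j =>
  if i = (0 : Fin 3) ∧ j = (1 : Fin 3) then e3 2
  else if i = (1 : Fin 3) ∧ j = (0 : Fin 3) then -(e3 2)
  else 0


noncomputable def sfun (t : ℂ) : ℂ := if t = 0 then 1 else t

lemma sfun_ne (t : ℂ) : sfun t ≠ 0 := by
  unfold sfun; split_ifs with h <;> simp [h]

noncomputable def Gm (t : ℂ) : (Matrix (Fin 3) (Fin 3) ℂ)ˣ :=
  ⟨Matrix.diagonal ![1, 1, sfun t], Matrix.diagonal ![1, 1, (sfun t)⁻¹],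
   by
     rw [Matrix.diagonal_mul_diagonal]
     have : (fun i => ![1, 1, sfun t] i * ![1, 1, (sfun t)⁻¹] i) = (1 : Fin 3 → ℂ) := by
       funext k; fin_cases k <;> simp [mul_inv_cancel₀ (sfun_ne t)]
     rw [this]; exact Matrix.diagonal_one,
   by
     rw [Matrix.diagonal_mul_diagonal]
     have : (fun i => ![1, 1, (sfun t)⁻¹] i * ![1, 1, sfun t] i) = (1 : Fin 3 → ℂ) := by
       funext k; fin_cases k <;> simp [inv_mul_cancel₀ (sfun_ne t)]
     rw [this]; exact Matrix.diagonal_one⟩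


lemma key (t c : ℂ) :
    actBil3 (Gm t) (c • μfrakL2) = (c * sfun t) • μfrakL2 := by
  funext i j k
  fin_cases i <;> fin_cases j <;> fin_cases k <;>
    simp [actBil3, Gm, μfrakL2, e3, Fin.sum_univ_three, Matrix.mulVec, dotProduct,
      Matrix.diagonal, Pi.single, Function.update, mul_comm]

/-- the family 𝔏₂^α degenerates to 𝔏₁. -/
theorem stmt17 : DegeneratesPairFam3 (fun _ => μfrakL2) νfrakL2 zeroBil3 νfrakL1 := by
  refine ⟨fun t => t⁻¹, fun t => Gm t, ?_, ?_⟩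
  · have hcong : ∀ᶠ t in 𝓝[≠] (0:ℂ),
        t • μfrakL2 = actBil3 (Gm t) μfrakL2 := by
      filter_upwards [self_mem_nhdsWithin] with t ht
      have ht' : t ≠ 0 := ht
      have := key t 1
      rw [one_smul] at this
      rw [this, one_mul]
      simp [sfun, ht']
    have h0 : (0:ℂ) • μfrakL2 = zeroBil3 := by
      funext i j k; simp [zeroBil3]
    have hlim : Tendsto (fun t : ℂ => t • μfrakL2) (𝓝[≠] (0:ℂ)) (𝓝 zeroBil3) := by
      rw [← h0]
      exact ((continuous_id.smul continuous_const).tendsto 0).mono_left nhdsWithin_le_nhds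
    exact hlim.congr' hcong
  · have hcong : ∀ᶠ t in 𝓝[≠] (0:ℂ),
        νfrakL1 = actBil3 (Gm t) (νfrakL2 t⁻¹) := by
      filter_upwards [self_mem_nhdsWithin] with t ht
      have ht' : t ≠ 0 := ht
      have hv : νfrakL2 t⁻¹ = t⁻¹ • μfrakL2 := by
        funext i j k; simp only [νfrakL2, μfrakL2, Pi.smul_apply]
        split_ifs <;> simp
      rw [hv, key t t⁻¹]
      have hs : t⁻¹ * sfun t = 1 := by simp [sfun, ht', inv_mul_cancel₀ ht']
      rw [hs, one_smul]
      rfl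
    exact tendsto_const_nhds.congr' hcong
end
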